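/- Let C_1,...,C_m be closed convex subsets of a real Hilbert space H with C := ∩C_i ≠ ∅, and let y_k := (P_{C_m} ⋯ P_{C_1})^k(y_0). Then k^{1/2}·‖y_k − y_{k−1}‖ → 0 as k → ∞, i.e., ‖y_k − y_{k−1}‖ = o(k^{−1/2}). -/
import Mathlib


noncomputable section
open Filter Metric

variable {H : Type} [NormedAddCommGroup H] [InnerProductSpace ℝ H] [CompleteSpace H]

/-- `cyclicComp P j` is the composition of the first `j` of the maps `P 0, …, P (m-1)`
(with `P 0` applied first).  In particular `cyclicComp P m = P_{C_m} ∘ ⋯ ∘ P_{C_1}` is one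
full sweep of the method of cyclic projections, and `cyclicComp P i` is the partial
product `Q_i = P_{C_i} ⋯ P_{C_1}` (with `cyclicComp P 0 = Q_0 = I`). -/
def cyclicComp {m : ℕ} (P : Fin m → H → H) (j : ℕ) : H → H :=
  fun x => ((List.ofFn P).take j).foldl (fun a p => p a) x

/-- `P i` is the metric (nearest-point) projection onto the set `C i`, for each `i`. -/
def IsMetricProj {m : ℕ} (C : Fin m → Set H) (P : Fin m → H → H) : Prop :=
  ∀ i x, P i x ∈ C i ∧ ∀ y ∈ C i, ‖x - P i x‖ ≤ ‖x - y‖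

/- ### Auxiliary lemmas -/

open scoped InnerProductSpace

open Finset in
/-- If `a` is nonnegative, nonincreasing, with bounded partial sums, then `k * a k → 0`. -/
lemma aux_tendsto_nat_mul {a : ℕ → ℝ} (h0 : ∀ k, 0 ≤ a k) (hmono : ∀ k, a (k + 1) ≤ a k)
    {B : ℝ} (hB : ∀ N, ∑ k ∈ Finset.range N, a k ≤ B) :
    Tendsto (fun k : ℕ => (k : ℝ) * a k) atTop (nhds 0) := by
  have hanti : Antitone a := antitone_nat_of_succ_le hmono
  have hsum : Summable a := summable_of_sum_range_le h0 hB
  set S : ℕ → ℝ := fun n => ∑ k ∈ Finset.range n, a k with hS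
  have hStend : Tendsto S atTop (nhds (∑' k, a k)) := hsum.hasSum.tendsto_sum_nat
  have hhalf : Tendsto (fun k : ℕ => k / 2) atTop atTop := by
    apply tendsto_atTop_atTop.mpr
    intro b
    exact ⟨2 * b, fun n hn => by omega⟩
  have hg : Tendsto (fun k : ℕ => 2 * (S k - S (k / 2))) atTop (nhds 0) := by
    have := (hStend.sub (hStend.comp hhalf)).const_mul 2
    simpa using this
  apply squeeze_zero (fun k => mul_nonneg (Nat.cast_nonneg k) (h0 k)) _ hg
  intro k
  have hle : k / 2 ≤ k := Nat.div_le_self k 2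
  have hbound : ((k - k / 2 : ℕ) : ℝ) * a k ≤ S k - S (k / 2) := by
    have : S k - S (k / 2) = ∑ j ∈ Finset.Ico (k / 2) k, a j := by
      rw [hS]
      rw [Finset.sum_Ico_eq_sub _ hle]
    rw [this]
    have : ∀ j ∈ Finset.Ico (k / 2) k, a k ≤ a j := by
      intro j hj
      exact hanti (le_of_lt (Finset.mem_Ico.mp hj).2)
    calc ((k - k / 2 : ℕ) : ℝ) * a k
        = (Finset.Ico (k / 2) k).card • a k := by
          rw [Nat.card_Ico, nsmul_eq_mul]
      _ ≤ ∑ j ∈ Finset.Ico (k / 2) k, a j := Finset.card_nsmul_le_sum _ _ _ this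
  have hk2 : (k : ℝ) ≤ 2 * ((k - k / 2 : ℕ) : ℝ) := by
    have : k ≤ 2 * (k - k / 2) := by omega
    calc (k : ℝ) ≤ ((2 * (k - k / 2) : ℕ) : ℝ) := by exact_mod_cast this
      _ = 2 * ((k - k / 2 : ℕ) : ℝ) := by push_cast; ring
  calc (k : ℝ) * a k ≤ 2 * ((k - k / 2 : ℕ) : ℝ) * a k :=
        mul_le_mul_of_nonneg_right hk2 (h0 k)
    _ = 2 * (((k - k / 2 : ℕ) : ℝ) * a k) := by ring
    _ ≤ 2 * (S k - S (k / 2)) := by linarith [hbound]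

/-- Variational characterization of the metric projection. -/
lemma aux_proj_inner {K : Set H} (hK : Convex ℝ K) {x u : H} (hu : u ∈ K)
    (hmin : ∀ y ∈ K, ‖x - u‖ ≤ ‖x - y‖) {w : H} (hw : w ∈ K) :
    ⟪x - u, w - u⟫_ℝ ≤ 0 := by
  haveI : Nonempty K := ⟨⟨u, hu⟩⟩
  have heq : ‖x - u‖ = ⨅ w : K, ‖x - w‖ := by
    apply le_antisymm
    · exact le_ciInf fun w => hmin w w.2
    · exact ciInf_le ⟨0, fun b ⟨w, hw'⟩ => hw' ▸ norm_nonneg _⟩ (⟨u, hu⟩ : K)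
  exact (norm_eq_iInf_iff_real_inner_le_zero hK hu).1 heq w hw

/-- Firm contraction inequality for a metric projection: `‖u-c‖² + ‖x-u‖² ≤ ‖x-c‖²`. -/
lemma aux_proj_dist_sq {K : Set H} (hK : Convex ℝ K) {x u c : H} (hu : u ∈ K)
    (hmin : ∀ y ∈ K, ‖x - u‖ ≤ ‖x - y‖) (hc : c ∈ K) :
    ‖u - c‖ ^ 2 + ‖x - u‖ ^ 2 ≤ ‖x - c‖ ^ 2 := by
  have h := aux_proj_inner hK hu hmin hc
  have hexp : ‖x - c‖ ^ 2 = ‖x - u‖ ^ 2 + 2 * ⟪x - u, u - c⟫_ℝ + ‖u - c‖ ^ 2 := by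
    have hxc : x - c = (x - u) + (u - c) := by abel
    rw [hxc, norm_add_sq_real]
  have hneg : ⟪x - u, u - c⟫_ℝ = -⟪x - u, c - u⟫_ℝ := by
    rw [← inner_neg_right]
    congr 1
    abel
  nlinarith [h]

/-- Metric projections are nonexpansive. -/
lemma aux_proj_nonexp {K : Set H} (hK : Convex ℝ K) {x y u v : H} (hu : u ∈ K) (hv : v ∈ K)
    (hmx : ∀ z ∈ K, ‖x - u‖ ≤ ‖x - z‖) (hmy : ∀ z ∈ K, ‖y - v‖ ≤ ‖y - z‖) :
    ‖u - v‖ ≤ ‖x - y‖ := by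
  have h1 : ⟪x - u, v - u⟫_ℝ ≤ 0 := aux_proj_inner hK hu hmx hv
  have h2 : ⟪y - v, u - v⟫_ℝ ≤ 0 := aux_proj_inner hK hv hmy hu
  have hsplit : ⟪x - y, u - v⟫_ℝ
      = -⟪x - u, v - u⟫_ℝ + ‖u - v‖ ^ 2 + (-⟪y - v, u - v⟫_ℝ) := by
    have hxy : x - y = (x - u) + (u - v) + (v - y) := by abel
    rw [hxy, inner_add_left, inner_add_left, real_inner_self_eq_norm_sq]
    have e1 : ⟪x - u, u - v⟫_ℝ = -⟪x - u, v - u⟫_ℝ := by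
      rw [← inner_neg_right]; congr 1; abel
    have e2 : ⟪v - y, u - v⟫_ℝ = -⟪y - v, u - v⟫_ℝ := by
      rw [← inner_neg_left]; congr 1; abel
    rw [e1, e2]
  have hcs : ⟪x - y, u - v⟫_ℝ ≤ ‖x - y‖ * ‖u - v‖ := real_inner_le_norm _ _
  nlinarith [norm_nonneg (x - y), norm_nonneg (u - v)]

lemma aux_cyclicComp_zero {m : ℕ} (P : Fin m → H → H) (x : H) :
    cyclicComp P 0 x = x := rfl

lemma aux_cyclicComp_succ {m : ℕ} (P : Fin m → H → H) {j : ℕ} (hj : j < m) (x : H) :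
    cyclicComp P (j + 1) x = P ⟨j, hj⟩ (cyclicComp P j x) := by
  unfold cyclicComp
  rw [List.take_succ]
  have hget : (List.ofFn P)[j]? = some (P ⟨j, hj⟩) := by
    rw [List.getElem?_eq_getElem (by simpa using hj)]
    simp
  rw [hget]
  simp [List.foldl_append]

section Main

variable {m : ℕ} {C : Fin m → Set H} {P : Fin m → H → H}

/-- One sweep: sum of squared substep increments is controlled by Fejér decrease. -/
lemma aux_sweep (hconv : ∀ i, Convex ℝ (C i)) (hP : IsMetricProj C P)
    {c : H} (hc : ∀ i, c ∈ C i) (x : H) :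
    ∀ j, j ≤ m →
      (∑ i ∈ Finset.range j, ‖cyclicComp P (i + 1) x - cyclicComp P i x‖ ^ 2)
        + ‖cyclicComp P j x - c‖ ^ 2 ≤ ‖x - c‖ ^ 2 := by
  intro j
  induction j with
  | zero => intro _; simp [aux_cyclicComp_zero]
  | succ j ih =>
    intro hj1
    have hj : j < m := hj1
    have IH := ih (le_of_lt hj)
    set z := cyclicComp P j x with hz
    have hsucc : cyclicComp P (j + 1) x = P ⟨j, hj⟩ z := aux_cyclicComp_succ P hj x
    obtain ⟨hmem, hmin⟩ := hP ⟨j, hj⟩ z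
    have key : ‖P ⟨j, hj⟩ z - c‖ ^ 2 + ‖z - P ⟨j, hj⟩ z‖ ^ 2 ≤ ‖z - c‖ ^ 2 :=
      aux_proj_dist_sq (hconv _) hmem hmin (hc _)
    rw [Finset.sum_range_succ, hsucc]
    have hrev : ‖P ⟨j, hj⟩ z - z‖ = ‖z - P ⟨j, hj⟩ z‖ := norm_sub_rev _ _
    rw [← hz, hrev]
    nlinarith [IH]

/-- Each partial composition is nonexpansive. -/
lemma aux_cyclic_nonexp (hconv : ∀ i, Convex ℝ (C i)) (hP : IsMetricProj C P) :
    ∀ j, j ≤ m → ∀ x y : H, ‖cyclicComp P j x - cyclicComp P j y‖ ≤ ‖x - y‖ := by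
  intro j
  induction j with
  | zero => intro _ x y; simp [aux_cyclicComp_zero]
  | succ j ih =>
    intro hj1 x y
    have hj : j < m := hj1
    rw [aux_cyclicComp_succ P hj x, aux_cyclicComp_succ P hj y]
    obtain ⟨hu, hmx⟩ := hP ⟨j, hj⟩ (cyclicComp P j x)
    obtain ⟨hv, hmy⟩ := hP ⟨j, hj⟩ (cyclicComp P j y)
    exact (aux_proj_nonexp (hconv _) hu hv hmx hmy).trans (ih (le_of_lt hj) x y)

/-- Telescoping triangle inequality for one sweep. -/
lemma aux_sweep_norm (x : H) :
    ∀ j, j ≤ m → ‖cyclicComp P j x - x‖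
      ≤ ∑ i ∈ Finset.range j, ‖cyclicComp P (i + 1) x - cyclicComp P i x‖ := by
  intro j
  induction j with
  | zero => intro _; simp [aux_cyclicComp_zero]
  | succ j ih =>
    intro hj1
    rw [Finset.sum_range_succ]
    calc ‖cyclicComp P (j + 1) x - x‖
        ≤ ‖cyclicComp P j x - x‖ + ‖cyclicComp P (j + 1) x - cyclicComp P j x‖ := by
          have : cyclicComp P (j + 1) x - x
              = (cyclicComp P j x - x) + (cyclicComp P (j + 1) x - cyclicComp P j x) := by abel
          rw [this]; exact norm_add_le _ _
      _ ≤ (∑ i ∈ Finset.range j, ‖cyclicComp P (i + 1) x - cyclicComp P i x‖)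
            + ‖cyclicComp P (j + 1) x - cyclicComp P j x‖ := by
          linarith [ih (le_of_lt hj1)]

/-- The key one-step estimate: `‖Tx - x‖² ≤ m (‖x-c‖² - ‖Tx-c‖²)`. -/
lemma aux_step (hconv : ∀ i, Convex ℝ (C i)) (hP : IsMetricProj C P)
    {c : H} (hc : ∀ i, c ∈ C i) (x : H) :
    ‖cyclicComp P m x - x‖ ^ 2
      ≤ (m : ℝ) * (‖x - c‖ ^ 2 - ‖cyclicComp P m x - c‖ ^ 2) := by
  have hsweep := aux_sweep hconv hP hc x m le_rfl
  have hnorm := aux_sweep_norm (P := P) x m le_rfl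
  have hcs : (∑ i ∈ Finset.range m, ‖cyclicComp P (i + 1) x - cyclicComp P i x‖) ^ 2
      ≤ (m : ℝ) * ∑ i ∈ Finset.range m, ‖cyclicComp P (i + 1) x - cyclicComp P i x‖ ^ 2 := by
    have := sq_sum_le_card_mul_sum_sq
      (s := Finset.range m) (f := fun i => ‖cyclicComp P (i + 1) x - cyclicComp P i x‖)
    simpa using this
  have hsumnn : (0 : ℝ) ≤ ∑ i ∈ Finset.range m,
      ‖cyclicComp P (i + 1) x - cyclicComp P i x‖ :=
    Finset.sum_nonneg fun _ _ => norm_nonneg _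
  calc ‖cyclicComp P m x - x‖ ^ 2
      ≤ (∑ i ∈ Finset.range m, ‖cyclicComp P (i + 1) x - cyclicComp P i x‖) ^ 2 := by
        apply pow_le_pow_left₀ (norm_nonneg _) hnorm
    _ ≤ (m : ℝ) * ∑ i ∈ Finset.range m, ‖cyclicComp P (i + 1) x - cyclicComp P i x‖ ^ 2 := hcs
    _ ≤ (m : ℝ) * (‖x - c‖ ^ 2 - ‖cyclicComp P m x - c‖ ^ 2) := by
        apply mul_le_mul_of_nonneg_left _ (Nat.cast_nonneg m)
        linarith [hsweep]

end Main

/-- For closed convex sets `C₁,…,Cₘ` with nonempty intersection, the cyclic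
projection iterates satisfy `‖y_k − y_{k−1}‖ = o(k^{−1/2})`, i.e.
`√k·‖y_{k+1} − y_k‖ → 0`. -/
theorem increment_littleO_inv_sqrt {m : ℕ} (C : Fin m → Set H)
    (hconv : ∀ i, Convex ℝ (C i)) (hclosed : ∀ i, IsClosed (C i))
    (hne : (⋂ i, C i).Nonempty)
    (P : Fin m → H → H) (hP : IsMetricProj C P) (y₀ : H) :
    Tendsto
      (fun k : ℕ =>
        Real.sqrt k * ‖(cyclicComp P m)^[k + 1] y₀ - (cyclicComp P m)^[k] y₀‖)
      atTop (nhds 0) := by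
  obtain ⟨c, hc⟩ := hne
  have hc' : ∀ i, c ∈ C i := by simpa [Set.mem_iInter] using hc
  set T := cyclicComp P m with hT
  set y : ℕ → H := fun k => T^[k] y₀ with hy
  set d : ℕ → ℝ := fun k => ‖y (k + 1) - y k‖ with hd
  set a : ℕ → ℝ := fun k => d k ^ 2 with ha
  have hyS : ∀ k, y (k + 1) = T (y k) := fun k => Function.iterate_succ_apply' T k y₀
  -- d is nonincreasing
  have hTy : ∀ x z : H, ‖T x - T z‖ ≤ ‖x - z‖ := by
    intro x z; rw [hT]; exact aux_cyclic_nonexp hconv hP m le_rfl x z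
  have hmono : ∀ k, a (k + 1) ≤ a k := by
    intro k
    have hdd : d (k + 1) ≤ d k := by
      simp only [hd, hyS]
      exact hTy _ _
    have hd0 : 0 ≤ d (k + 1) := norm_nonneg _
    simpa [ha] using pow_le_pow_left₀ hd0 hdd 2
  have h0 : ∀ k, 0 ≤ a k := fun k => sq_nonneg _
  -- partial sums of a are bounded
  have hstep : ∀ k, a k ≤ (m : ℝ) * (‖y k - c‖ ^ 2 - ‖y (k + 1) - c‖ ^ 2) := by
    intro k
    have := aux_step hconv hP hc' (y k)
    rw [← hT, ← hyS k] at this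
    simpa [ha, hd] using this
  have hB : ∀ N, ∑ k ∈ Finset.range N, a k ≤ (m : ℝ) * ‖y₀ - c‖ ^ 2 := by
    intro N
    have htel : ∑ k ∈ Finset.range N,
        ((m : ℝ) * (‖y k - c‖ ^ 2 - ‖y (k + 1) - c‖ ^ 2))
          = (m : ℝ) * (‖y 0 - c‖ ^ 2 - ‖y N - c‖ ^ 2) := by
      rw [← Finset.mul_sum, Finset.sum_range_sub' (fun k => ‖y k - c‖ ^ 2)]
    calc ∑ k ∈ Finset.range N, a k
        ≤ ∑ k ∈ Finset.range N, (m : ℝ) * (‖y k - c‖ ^ 2 - ‖y (k + 1) - c‖ ^ 2) :=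
          Finset.sum_le_sum fun k _ => hstep k
      _ = (m : ℝ) * (‖y 0 - c‖ ^ 2 - ‖y N - c‖ ^ 2) := htel
      _ ≤ (m : ℝ) * ‖y₀ - c‖ ^ 2 := by
          have hy0 : y 0 = y₀ := rfl
          have : (0 : ℝ) ≤ ‖y N - c‖ ^ 2 := sq_nonneg _
          have hm : (0 : ℝ) ≤ (m : ℝ) := Nat.cast_nonneg m
          rw [hy0] at *
          nlinarith
  have hka : Tendsto (fun k : ℕ => (k : ℝ) * a k) atTop (nhds 0) :=
    aux_tendsto_nat_mul h0 hmono hB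
  have heq : (fun k : ℕ => Real.sqrt k * d k)
      = Real.sqrt ∘ (fun k : ℕ => (k : ℝ) * a k) := by
    funext k
    simp only [Function.comp_apply]
    rw [Real.sqrt_mul (Nat.cast_nonneg k)]
    congr 1
    rw [ha]
    exact (Real.sqrt_sq (norm_nonneg _)).symm
  have hfinal : Tendsto (fun k : ℕ => Real.sqrt k * d k) atTop (nhds 0) := by
    rw [heq]
    exact (Real.continuous_sqrt.tendsto' 0 0 Real.sqrt_zero).comp hka
  exact hfinal
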